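/- Fix integers p ≥ 2 and 0 ≤ i ≤ ⌊(p−1)/2⌋ and let u : ℝ^{1+n} → ℂ be smooth. Then u solves the (p,i)-submodel, i.e. Σ'_μ ∂_μ^{p−i}(uᵏ)·∂_μ^{i}(ūˡ) = 0 for all k = 1,…,p−i and l = 0,…,i, if and only if Σ'_μ B_{p−i,j}[u;μ](x) · B_{i,k}[ū;μ](x) = 0 for all j = 1,…,p−i, all k = 0,…,i, and all x ∈ ℝ^{1+n}. -/

import Mathlib

/-- Iterated partial derivative `∂_μᵐ u (x)` of `u : ℝ^{1+n} → ℂ` in the coordinate `x_μ`. -/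
noncomputable def ipd {n : ℕ} (μ : Fin (n + 1)) (m : ℕ)
    (u : (Fin (n + 1) → ℝ) → ℂ) (x : Fin (n + 1) → ℝ) : ℂ :=
  iteratedDeriv m (fun t => u (Function.update x μ t)) (x μ)

/-- The Minkowski sum `Σ'_μ A_μ = A₀ − Σ_{j=1}^{n} A_j`. -/
noncomputable def minkSum {n : ℕ} (A : Fin (n + 1) → ℂ) : ℂ := A 0 - ∑ j : Fin n, A j.succ

/-- `u : ℝ^{1+n} → ℂ` solves the `(p,i)`-submodel:
`Σ'_μ ∂_μ^{p−i}(uᵏ)·∂_μ^{i}(ūˡ) = 0` for all `k = 1,…,p−i` and `l = 0,…,i`. -/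
def SolvesSubmodel {n : ℕ} (p i : ℕ) (u : (Fin (n + 1) → ℝ) → ℂ) : Prop :=
  ∀ k ∈ Finset.Icc 1 (p - i), ∀ l ∈ Finset.Icc 0 i, ∀ x,
    minkSum (fun μ => ipd μ (p - i) (fun y => u y ^ k) x *
      ipd μ i (fun y => (starRingEnd ℂ) (u y) ^ l) x) = 0

/-- The Bell matrix entry `B_{a,j}[d] = Σ a!/(k₁!⋯k_a!) ∏_{m=1}^a (d_m/m!)^{k_m}`,
the sum over tuples `(k₁,…,k_a)` of nonnegative integers with `k₁+2k₂+⋯+a·k_a = a`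
and `k₁+⋯+k_a = j`; with this definition `B_{a,0} = δ_{a,0}` and `B_{a,j} = 0` for
`a < j` automatically. -/
noncomputable def bellB (a j : ℕ) (d : ℕ → ℂ) : ℂ :=
  ∑ k ∈ (Fintype.piFinset fun _ : Fin a => Finset.range (a + 1)).filter
      (fun k => (∑ m : Fin a, (m.1 + 1) * k m) = a ∧ (∑ m : Fin a, k m) = j),
    (a.factorial : ℂ) *
      ∏ m : Fin a, ((d (m.1 + 1) / (m.1 + 1).factorial) ^ (k m) / (k m).factorial)

private lemma itd_const (c : ℂ) (m : ℕ) (t : ℝ) :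
    iteratedDeriv m (fun _ : ℝ => c) t = if m = 0 then c else 0 := by
  induction m generalizing c t with
  | zero => simp
  | succ m ih =>
    rw [iteratedDeriv_succ']
    have : (deriv fun _ : ℝ => c) = fun _ : ℝ => (0:ℂ) := funext fun _ => deriv_const _ _
    rw [this, ih]
    simp

private lemma diffItd {f : ℝ → ℂ} (hf : ContDiff ℝ (⊤:ℕ∞) f) (m : ℕ) :
    Differentiable ℝ (iteratedDeriv m f) :=
  hf.differentiable_iteratedDeriv m (by exact_mod_cast WithTop.coe_lt_top _)

private lemma leibniz {f g : ℝ → ℂ} (hf : ContDiff ℝ (⊤:ℕ∞) f) (hg : ContDiff ℝ (⊤:ℕ∞) g)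
    (n : ℕ) (t : ℝ) :
    iteratedDeriv n (fun s => f s * g s) t =
      ∑ p ∈ Finset.HasAntidiagonal.antidiagonal n,
        (n.choose p.1 : ℂ) * iteratedDeriv p.1 f t * iteratedDeriv p.2 g t := by
  induction n generalizing t with
  | zero => simp [iteratedDeriv_zero]
  | succ n ih =>
    have ihF : iteratedDeriv n (fun s => f s * g s) = fun t =>
        ∑ p ∈ Finset.HasAntidiagonal.antidiagonal n,
          (n.choose p.1 : ℂ) * iteratedDeriv p.1 f t * iteratedDeriv p.2 g t := funext ih
    rw [iteratedDeriv_succ, ihF]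
    have hdiff : ∀ p ∈ Finset.HasAntidiagonal.antidiagonal n, DifferentiableAt ℝ
        (fun s => (n.choose p.1 : ℂ) * iteratedDeriv p.1 f s * iteratedDeriv p.2 g s) t := by
      intro p _
      exact (((diffItd hf p.1 t).const_mul _).mul (diffItd hg p.2 t))
    rw [deriv_fun_sum hdiff]
    have hterm : ∀ p ∈ Finset.HasAntidiagonal.antidiagonal n,
        deriv (fun s => (n.choose p.1 : ℂ) * iteratedDeriv p.1 f s * iteratedDeriv p.2 g s) t =
          (n.choose p.1 : ℂ) * iteratedDeriv (p.1+1) f t * iteratedDeriv p.2 g t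
            + (n.choose p.1 : ℂ) * iteratedDeriv p.1 f t * iteratedDeriv (p.2+1) g t := by
      intro p _
      have h1 : (fun s => (n.choose p.1 : ℂ) * iteratedDeriv p.1 f s * iteratedDeriv p.2 g s)
          = fun s => (n.choose p.1 : ℂ) * (iteratedDeriv p.1 f s * iteratedDeriv p.2 g s) := by
        funext s; ring
      rw [h1, deriv_const_mul (d := fun s => iteratedDeriv p.1 f s * iteratedDeriv p.2 g s) _
          ((diffItd hf p.1 t).mul (diffItd hg p.2 t)),
        deriv_fun_mul (diffItd hf p.1 t) (diffItd hg p.2 t), iteratedDeriv_succ, iteratedDeriv_succ]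
      ring
    rw [Finset.sum_congr rfl hterm]
    -- now the combinatorial identity
    have succ1 := Finset.Nat.sum_antidiagonal_succ (n := n)
      (f := fun p => (((n+1).choose p.1 : ℕ) : ℂ) * iteratedDeriv p.1 f t * iteratedDeriv p.2 g t)
    have succ2 := Finset.Nat.sum_antidiagonal_succ (n := n)
      (f := fun p => ((n.choose p.1 : ℕ) : ℂ) * iteratedDeriv p.1 f t * iteratedDeriv p.2 g t)
    have succ3 := Finset.Nat.sum_antidiagonal_succ' (n := n)
      (f := fun p => ((n.choose p.1 : ℕ) : ℂ) * iteratedDeriv p.1 f t * iteratedDeriv p.2 g t)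
    simp only [Nat.choose_zero_right, Nat.choose_succ_succ, Nat.choose_succ_self, Nat.cast_add,
      Nat.cast_one, Nat.cast_zero, Nat.succ_eq_add_one, add_mul,
      Finset.sum_add_distrib] at succ1 succ2 succ3 ⊢
    linear_combination succ2 - succ1 - succ3

/-- Taylor series of `f` at `t`. -/
private noncomputable def tser (f : ℝ → ℂ) (t : ℝ) : PowerSeries ℂ :=
  PowerSeries.mk fun m => iteratedDeriv m f t / m.factorial

private lemma tser_pow {f : ℝ → ℂ} (hf : ContDiff ℝ (⊤:ℕ∞) f) (k : ℕ) (a : ℕ) (t : ℝ) :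
    iteratedDeriv a (fun s => f s ^ k) t =
      (a.factorial : ℂ) * PowerSeries.coeff a ((tser f t) ^ k) := by
  induction k generalizing a t with
  | zero =>
    simp only [pow_zero]
    rw [show (fun _ : ℝ => (1:ℂ)) = fun _ : ℝ => (1:ℂ) from rfl, itd_const,
      PowerSeries.coeff_one]
    split <;> simp_all
  | succ k ih =>
    have hfk : ContDiff ℝ (⊤:ℕ∞) (fun s => f s ^ k) := hf.pow k
    calc iteratedDeriv a (fun s => f s ^ (k+1)) t
        = iteratedDeriv a (fun s => f s * f s ^ k) t := by
          rw [show (fun s : ℝ => f s ^ (k+1)) = fun s => f s * f s ^ k by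
            funext s; rw [pow_succ']]
      _ = ∑ p ∈ Finset.HasAntidiagonal.antidiagonal a,
            (a.choose p.1 : ℂ) * iteratedDeriv p.1 f t * iteratedDeriv p.2 (fun s => f s ^ k) t :=
          leibniz hf hfk a t
      _ = (a.factorial : ℂ) * PowerSeries.coeff a ((tser f t) ^ (k+1)) := by
          rw [pow_succ', PowerSeries.coeff_mul, Finset.mul_sum]
          refine Finset.sum_congr rfl fun p hp => ?_
          have hpa : p.1 + p.2 = a := (Finset.HasAntidiagonal.mem_antidiagonal).mp hp
          rw [ih p.2 t]
          show (a.choose p.1 : ℂ) * iteratedDeriv p.1 f t *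
              ((p.2.factorial : ℂ) * PowerSeries.coeff p.2 (tser f t ^ k)) = _
          rw [show PowerSeries.coeff p.1 (tser f t) = iteratedDeriv p.1 f t / p.1.factorial from
            PowerSeries.coeff_mk _ _]
          have hfac : (a.factorial : ℂ) = (a.choose p.1 : ℂ) * p.1.factorial * p.2.factorial := by
            have := Nat.choose_mul_factorial_mul_factorial (show p.1 ≤ a by omega)
            have h2 : a - p.1 = p.2 := by omega
            rw [h2] at this
            exact_mod_cast this.symm
          rw [hfac]
          have h1 : (p.1.factorial : ℂ) ≠ 0 := Nat.cast_ne_zero.mpr p.1.factorial_ne_zero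
          field_simp

private lemma sumIccFin {M : Type*} [AddCommMonoid M] (a : ℕ) (F : ℕ → M) :
    ∑ m ∈ Finset.Icc 1 a, F m = ∑ m : Fin a, F (m.1 + 1) := by
  induction a with
  | zero => simp
  | succ a ih => rw [Finset.sum_Icc_succ_top (by omega), ih, Fin.sum_univ_castSucc]; rfl

private lemma prodIccFin {M : Type*} [CommMonoid M] (a : ℕ) (F : ℕ → M) :
    ∏ m ∈ Finset.Icc 1 a, F m = ∏ m : Fin a, F (m.1 + 1) := by
  induction a with
  | zero => simp
  | succ a ih => rw [Finset.prod_Icc_succ_top (by omega), ih, Fin.prod_univ_castSucc]; rfl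

private lemma bellB_zero_of_lt {a j : ℕ} (h : a < j) (d : ℕ → ℂ) : bellB a j d = 0 := by
  rw [bellB]
  refine Finset.sum_eq_zero fun k hk => absurd ?_ (by omega : ¬ j ≤ a)
  obtain ⟨-, h1, h2⟩ := Finset.mem_filter.mp hk
  calc j = ∑ m : Fin a, k m := h2.symm
    _ ≤ ∑ m : Fin a, (m.1 + 1) * k m :=
        Finset.sum_le_sum fun m _ => Nat.le_mul_of_pos_left _ (by omega)
    _ = a := h1

private lemma bellB_zero_of_ne {a : ℕ} (h : a ≠ 0) (d : ℕ → ℂ) : bellB a 0 d = 0 := by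
  rw [bellB]
  refine Finset.sum_eq_zero fun k hk => absurd ?_ h
  obtain ⟨-, h1, h2⟩ := Finset.mem_filter.mp hk
  have : ∀ m : Fin a, k m = 0 := by
    intro m
    by_contra hm
    exact absurd h2 (Finset.sum_eq_zero_iff.not.mpr (by push_neg; exact ⟨m, Finset.mem_univ m, hm⟩))
  simp only [this, Nat.mul_zero, Finset.sum_const_zero] at h1
  omega

private lemma bellB_coeff (a j : ℕ) (d : ℕ → ℂ) :
    (j.factorial : ℂ) * bellB a j d =
      (a.factorial : ℂ) * PowerSeries.coeff a
        ((∑ m ∈ Finset.Icc 1 a, PowerSeries.C (d m / m.factorial) * PowerSeries.X ^ m) ^ j) := by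
  classical
  rw [Finset.sum_pow_eq_sum_piAntidiag, map_sum, Finset.mul_sum]
  -- compute the coefficient of each summand
  have hco : ∀ g ∈ Finset.piAntidiag (Finset.Icc 1 a) j,
      (a.factorial : ℂ) * PowerSeries.coeff a
        ((Nat.multinomial (Finset.Icc 1 a) g : PowerSeries ℂ) *
          ∏ m ∈ Finset.Icc 1 a, (PowerSeries.C (d m / m.factorial) * PowerSeries.X ^ m) ^ g m) =
      if ∑ m ∈ Finset.Icc 1 a, m * g m = a then
        (a.factorial : ℂ) * (Nat.multinomial (Finset.Icc 1 a) g : ℂ) *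
          ∏ m ∈ Finset.Icc 1 a, (d m / m.factorial) ^ g m
      else 0 := by
    intro g hg
    have : (Nat.multinomial (Finset.Icc 1 a) g : PowerSeries ℂ) *
        ∏ m ∈ Finset.Icc 1 a, (PowerSeries.C (d m / m.factorial) * PowerSeries.X ^ m) ^ g m =
        PowerSeries.C ((Nat.multinomial (Finset.Icc 1 a) g : ℂ) *
            ∏ m ∈ Finset.Icc 1 a, (d m / m.factorial) ^ g m) *
          PowerSeries.X ^ (∑ m ∈ Finset.Icc 1 a, m * g m) := by
      simp only [mul_pow, ← map_pow, Finset.prod_mul_distrib, ← map_prod, ← pow_mul,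
        Finset.prod_pow_eq_pow_sum, map_mul, map_natCast]
      ring
    rw [this, PowerSeries.coeff_C_mul_X_pow]
    split_ifs with h1 h2 h2
    · ring
    · exact absurd h1.symm h2
    · exact absurd h2.symm h1
    · rw [mul_zero]
  rw [Finset.sum_congr rfl hco, ← Finset.sum_filter]
  rw [bellB, Finset.mul_sum]
  refine Finset.sum_bij' (i := fun k _ => (fun m => if hm : 1 ≤ m ∧ m ≤ a then k ⟨m-1, by omega⟩ else 0 : ℕ → ℕ))
    (j := fun g _ => (fun m : Fin a => g (m.1+1))) ?_ ?_ ?_ ?_ ?_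
  · -- i maps into target
    intro k hk
    obtain ⟨-, h1, h2⟩ := Finset.mem_filter.mp hk
    have key : ∀ m : Fin a, (if hm : 1 ≤ m.1+1 ∧ m.1+1 ≤ a then k ⟨m.1+1-1, by omega⟩ else 0) = k m := by
      intro m
      rw [dif_pos ⟨by omega, by omega⟩]
      congr 1
    refine Finset.mem_filter.mpr ⟨Finset.mem_piAntidiag.mpr ⟨?_, ?_⟩, ?_⟩
    · rw [sumIccFin]
      simp only [key]
      exact h2
    · intro m hm
      rw [Finset.mem_Icc]
      by_contra hmem
      rw [dif_neg (by omega)] at hm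
      exact hm rfl
    · rw [sumIccFin]
      simp only [key]
      exact h1
  · -- j maps into source
    intro g hg
    obtain ⟨hmem, hdeg⟩ := Finset.mem_filter.mp hg
    obtain ⟨hsum, hsupp⟩ := Finset.mem_piAntidiag.mp hmem
    rw [sumIccFin] at hdeg hsum
    refine Finset.mem_filter.mpr ⟨Fintype.mem_piFinset.mpr fun m => ?_, hdeg, hsum⟩
    rw [Finset.mem_range]
    have h1 : (m.1 + 1) * g (m.1 + 1) ≤ ∑ m' : Fin a, (m'.1 + 1) * g (m'.1 + 1) :=
      Finset.single_le_sum (f := fun m' : Fin a => (m'.1 + 1) * g (m'.1 + 1))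
        (fun _ _ => Nat.zero_le _) (Finset.mem_univ m)
    rw [hdeg] at h1
    have := Nat.le_mul_of_pos_left (g (m.1+1)) (show 0 < m.1 + 1 by omega)
    omega
  · -- left inverse
    intro k hk
    funext m
    dsimp only
    rw [dif_pos ⟨by omega, by omega⟩]
    congr 1
  · -- right inverse
    intro g hg
    obtain ⟨hmem, -⟩ := Finset.mem_filter.mp hg
    obtain ⟨-, hsupp⟩ := Finset.mem_piAntidiag.mp hmem
    funext m
    dsimp only
    by_cases hm : 1 ≤ m ∧ m ≤ a
    · rw [dif_pos hm]
      congr 1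
      omega
    · rw [dif_neg hm]
      by_contra h0
      have := hsupp m (Ne.symm h0)
      rw [Finset.mem_Icc] at this
      exact hm ⟨this.1, this.2⟩
  · -- values agree
    intro k hk
    dsimp only
    obtain ⟨-, h1, h2⟩ := Finset.mem_filter.mp hk
    have key : ∀ m : Fin a, (if hm : 1 ≤ m.1+1 ∧ m.1+1 ≤ a then k ⟨m.1+1-1, by omega⟩ else 0) = k m := by
      intro m
      rw [dif_pos ⟨by omega, by omega⟩]
      congr 1
    set g : ℕ → ℕ := fun m => if hm : 1 ≤ m ∧ m ≤ a then k ⟨m-1, by omega⟩ else 0 with hgdef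
    have hgsum : ∑ m ∈ Finset.Icc 1 a, g m = j := by
      rw [sumIccFin]; simp only [hgdef, key]; exact h2
    have hprodfac : ∏ m ∈ Finset.Icc 1 a, (g m).factorial = ∏ m : Fin a, (k m).factorial := by
      rw [prodIccFin]; simp only [hgdef, key]
    have hprodc : ∏ m ∈ Finset.Icc 1 a, (d m / (m.factorial : ℂ)) ^ g m
        = ∏ m : Fin a, (d (m.1+1) / ((m.1+1).factorial : ℂ)) ^ k m := by
      rw [prodIccFin]; simp only [hgdef, key]
    have hspec := Nat.multinomial_spec (Finset.Icc 1 a) g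
    rw [hgsum, hprodfac] at hspec
    -- hspec : (∏ m : Fin a, (k m)!) * multinomial = j !
    rw [hprodc]
    have hne : (∏ m : Fin a, ((k m).factorial : ℂ)) ≠ 0 :=
      Finset.prod_ne_zero_iff.mpr fun m _ => Nat.cast_ne_zero.mpr (Nat.factorial_ne_zero _)
    have hcast : (∏ m : Fin a, ((k m).factorial : ℂ)) * (Nat.multinomial (Finset.Icc 1 a) g : ℂ)
        = (j.factorial : ℂ) := by exact_mod_cast congrArg (Nat.cast (R := ℂ)) hspec
    simp only [div_eq_mul_inv, Finset.prod_mul_distrib]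
    rw [← hcast]
    rw [Finset.prod_inv_distrib]
    have hne2 : (∏ x : Fin a, (((x.1+1).factorial : ℂ)) ^ k x) ≠ 0 :=
      Finset.prod_ne_zero_iff.mpr fun m _ =>
        pow_ne_zero _ (Nat.cast_ne_zero.mpr (Nat.factorial_ne_zero _))
    field_simp

private lemma coeff_pow_congr {φ ψ : PowerSeries ℂ} {a : ℕ}
    (h : ∀ m ≤ a, PowerSeries.coeff m φ = PowerSeries.coeff m ψ) (j : ℕ) :
    ∀ b ≤ a, PowerSeries.coeff b (φ ^ j) = PowerSeries.coeff b (ψ ^ j) := by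
  induction j with
  | zero => intro b _; rw [pow_zero, pow_zero]
  | succ j ih =>
    intro b hb
    rw [pow_succ, pow_succ, PowerSeries.coeff_mul, PowerSeries.coeff_mul]
    refine Finset.sum_congr rfl fun p hp => ?_
    have hpb : p.1 + p.2 = b := Finset.HasAntidiagonal.mem_antidiagonal.mp hp
    rw [ih p.1 (by omega), h p.2 (by omega)]

/-- Faà di Bruno for powers. -/
private lemma faa {f : ℝ → ℂ} (hf : ContDiff ℝ (⊤:ℕ∞) f) (k a : ℕ) (t : ℝ) :
    iteratedDeriv a (fun s => f s ^ k) t =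
      ∑ j ∈ Finset.range (a + 1),
        (k.descFactorial j : ℂ) * f t ^ (k - j) * bellB a j (fun m => iteratedDeriv m f t) := by
  classical
  set d : ℕ → ℂ := fun m => iteratedDeriv m f t with hd
  set G : PowerSeries ℂ :=
    ∑ m ∈ Finset.Icc 1 a, PowerSeries.C (d m / m.factorial) * PowerSeries.X ^ m with hG
  have hcoeffs : ∀ m ≤ a, PowerSeries.coeff m (tser f t) =
      PowerSeries.coeff m (PowerSeries.C (f t) + G) := by
    intro m hm
    rw [map_add, hG, map_sum]
    simp only [PowerSeries.coeff_C_mul_X_pow, PowerSeries.coeff_C]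
    rw [Finset.sum_ite_eq (Finset.Icc 1 a) m (fun m' => d m' / (m'.factorial : ℂ))]
    rw [show PowerSeries.coeff m (tser f t) = d m / (m.factorial : ℂ) from
      PowerSeries.coeff_mk _ _]
    by_cases h0 : m = 0
    · subst h0
      simp [hd, iteratedDeriv_zero]
    · rw [if_neg h0, if_pos (Finset.mem_Icc.mpr ⟨by omega, hm⟩), zero_add]
  have step1 : iteratedDeriv a (fun s => f s ^ k) t =
      (a.factorial : ℂ) * PowerSeries.coeff a ((PowerSeries.C (f t) + G) ^ k) := by
    rw [tser_pow hf k a t, coeff_pow_congr hcoeffs k a le_rfl]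
  rw [step1, add_comm (PowerSeries.C (f t)) G, add_pow, map_sum, Finset.mul_sum]
  have hterm : ∀ j ∈ Finset.range (k + 1),
      (a.factorial : ℂ) * PowerSeries.coeff a
          (G ^ j * PowerSeries.C (f t) ^ (k - j) * (k.choose j : PowerSeries ℂ)) =
        (k.descFactorial j : ℂ) * f t ^ (k - j) * bellB a j d := by
    intro j _
    have : G ^ j * PowerSeries.C (f t) ^ (k - j) * (k.choose j : PowerSeries ℂ) =
        PowerSeries.C (f t ^ (k - j) * (k.choose j : ℂ)) * G ^ j := by
      rw [← map_pow, ← map_natCast (PowerSeries.C (R := ℂ)) (k.choose j), map_mul]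
      ring
    rw [this, PowerSeries.coeff_C_mul, Nat.descFactorial_eq_factorial_mul_choose, hG]
    push_cast
    linear_combination (-(f t ^ (k - j) * (k.choose j : ℂ))) * (bellB_coeff a j d)
  rw [Finset.sum_congr rfl hterm]
  -- reindex from range (k+1) to range (a+1)
  set T : ℕ → ℂ := fun j => (k.descFactorial j : ℂ) * f t ^ (k - j) * bellB a j d with hT
  have hTk : ∀ j, k < j → T j = 0 := fun j hj => by
    rw [hT]
    simp [Nat.descFactorial_eq_zero_iff_lt.mpr hj]
  have hTa : ∀ j, a < j → T j = 0 := fun j hj => by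
    rw [hT]
    simp [bellB_zero_of_lt hj]
  have h1 : ∑ j ∈ Finset.range (k + 1), T j = ∑ j ∈ Finset.range (max k a + 1), T j :=
    Finset.sum_subset (Finset.range_subset_range.mpr (by omega))
      (fun j _ hj => hTk j (by simp only [Finset.mem_range] at hj ⊢; omega))
  have h2 : ∑ j ∈ Finset.range (a + 1), T j = ∑ j ∈ Finset.range (max k a + 1), T j :=
    Finset.sum_subset (Finset.range_subset_range.mpr (by omega))
      (fun j _ hj => hTa j (by simp only [Finset.mem_range] at hj ⊢; omega))
  rw [h1, ← h2]

private lemma minkSum_sum {n : ℕ} {ι : Type*} (s : Finset ι) (g : ι → Fin (n+1) → ℂ) :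
    minkSum (fun μ => ∑ j ∈ s, g j μ) = ∑ j ∈ s, minkSum (g j) := by
  simp only [minkSum, Finset.sum_sub_distrib]
  rw [Finset.sum_comm]

private lemma minkSum_mul {n : ℕ} (c : ℂ) (A : Fin (n+1) → ℂ) :
    minkSum (fun μ => c * A μ) = c * minkSum A := by
  simp [minkSum, Finset.mul_sum, mul_sub]

/-- Inversion of a triangular system. -/
private lemma triang {lo hi : ℕ} (M : ℕ → ℕ → ℂ) (V : ℕ → ℂ)
    (h0 : ∀ k j, k < j → M k j = 0) (hd : ∀ k, M k k ≠ 0)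
    (h : ∀ k ∈ Finset.Icc lo hi, ∑ j ∈ Finset.Icc lo hi, M k j * V j = 0) :
    ∀ j ∈ Finset.Icc lo hi, V j = 0 := by
  intro j
  induction j using Nat.strong_induction_on with
  | _ j ih =>
    intro hj
    have hj' := h j hj
    rw [Finset.sum_eq_single j (fun b hb hbj => ?_) (fun h' => absurd hj h')] at hj'
    · exact (mul_eq_zero.mp hj').resolve_left (hd j)
    · rcases lt_or_gt_of_ne hbj with hlt | hgt
      · rw [ih b hlt hb, mul_zero]
      · rw [h0 j b hgt, zero_mul]

/-- A smooth `u` solves the `(p,i)`-submodel iff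
`Σ'_μ B_{p−i,j}[u;μ](x)·B_{i,k}[ū;μ](x) = 0` for all `j = 1,…,p−i`, `k = 0,…,i`
and all `x`. -/
theorem submodel_iff_bellMatrix {n : ℕ} (p i : ℕ) (hp : 2 ≤ p) (hi : i ≤ (p - 1) / 2)
    (u : (Fin (n + 1) → ℝ) → ℂ) (hu : ContDiff ℝ (⊤ : ℕ∞) u) :
    SolvesSubmodel p i u ↔
      ∀ j ∈ Finset.Icc 1 (p - i), ∀ k ∈ Finset.Icc 0 i, ∀ x,
        minkSum (fun μ => bellB (p - i) j (fun m => ipd μ m u x) *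
          bellB i k (fun m => ipd μ m (fun y => (starRingEnd ℂ) (u y)) x)) = 0 := by
  classical
  have hpi : 1 ≤ p - i := by
    have h1 : (p - 1) / 2 ≤ p - 1 := Nat.div_le_self _ _
    omega
  have hu' : ContDiff ℝ (⊤:ℕ∞) u := hu.of_le (by simp)
  set v : (Fin (n + 1) → ℝ) → ℂ := fun y => (starRingEnd ℂ) (u y) with hvdef
  have hv : ContDiff ℝ (⊤:ℕ∞) v := by
    have := Complex.conjCLE.contDiff.comp hu'
    exact this
  set V : (Fin (n+1) → ℝ) → ℕ → ℕ → ℂ := fun x j k' =>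
    minkSum (fun μ => bellB (p - i) j (fun m => ipd μ m u x) *
      bellB i k' (fun m => ipd μ m v x)) with hVdef
  have hmink : ∀ (x : Fin (n+1) → ℝ) (k l : ℕ),
      minkSum (fun μ => ipd μ (p - i) (fun y => u y ^ k) x *
        ipd μ i (fun y => (starRingEnd ℂ) (u y) ^ l) x) =
      ∑ j ∈ Finset.Icc 1 (p - i), ∑ k' ∈ Finset.Icc 0 i,
        ((k.descFactorial j : ℂ) * u x ^ (k - j)) *
          ((l.descFactorial k' : ℂ) * v x ^ (l - k')) * V x j k' := by
    intro x k l
    have hA : ∀ μ : Fin (n+1), ipd μ (p - i) (fun y => u y ^ k) x =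
        ∑ j ∈ Finset.range (p - i + 1), (k.descFactorial j : ℂ) * u x ^ (k - j) *
          bellB (p - i) j (fun m => ipd μ m u x) := by
      intro μ
      have hfμ : ContDiff ℝ (⊤:ℕ∞) (fun t => u (Function.update x μ t)) :=
        hu'.comp (contDiff_update _ x μ)
      have h := faa hfμ k (p - i) (x μ)
      simp only [Function.update_eq_self] at h
      exact h
    have hB : ∀ μ : Fin (n+1), ipd μ i (fun y => (starRingEnd ℂ) (u y) ^ l) x =
        ∑ k' ∈ Finset.range (i + 1), (l.descFactorial k' : ℂ) * v x ^ (l - k') *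
          bellB i k' (fun m => ipd μ m v x) := by
      intro μ
      have hgμ : ContDiff ℝ (⊤:ℕ∞) (fun t => v (Function.update x μ t)) :=
        hv.comp (contDiff_update _ x μ)
      have h := faa hgμ l i (x μ)
      simp only [Function.update_eq_self] at h
      exact h
    have hsplit : (fun μ : Fin (n+1) => ipd μ (p - i) (fun y => u y ^ k) x *
        ipd μ i (fun y => (starRingEnd ℂ) (u y) ^ l) x) =
        fun μ => ∑ j ∈ Finset.range (p - i + 1), ∑ k' ∈ Finset.range (i + 1),
          (((k.descFactorial j : ℂ) * u x ^ (k - j)) *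
            ((l.descFactorial k' : ℂ) * v x ^ (l - k'))) *
          (bellB (p - i) j (fun m => ipd μ m u x) * bellB i k' (fun m => ipd μ m v x)) := by
      funext μ
      rw [hA μ, hB μ, Finset.sum_mul_sum]
      exact Finset.sum_congr rfl fun j _ => Finset.sum_congr rfl fun k' _ => by ring
    rw [hsplit, minkSum_sum]
    have hIcc0 : ∀ N : ℕ, Finset.range (N + 1) = Finset.Icc 0 N := by
      intro N
      rw [← Nat.Ico_zero_eq_range, Finset.Ico_add_one_right_eq_Icc]
    have hterm : ∀ j ∈ Finset.range (p - i + 1),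
        minkSum (fun μ => ∑ k' ∈ Finset.range (i + 1),
          (((k.descFactorial j : ℂ) * u x ^ (k - j)) *
            ((l.descFactorial k' : ℂ) * v x ^ (l - k'))) *
          (bellB (p - i) j (fun m => ipd μ m u x) * bellB i k' (fun m => ipd μ m v x))) =
        ∑ k' ∈ Finset.Icc 0 i,
          ((k.descFactorial j : ℂ) * u x ^ (k - j)) *
            ((l.descFactorial k' : ℂ) * v x ^ (l - k')) * V x j k' := by
      intro j _
      rw [minkSum_sum, hIcc0 i]
      exact Finset.sum_congr rfl fun k' _ => by rw [minkSum_mul, hVdef, mul_assoc]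
    rw [Finset.sum_congr rfl hterm]
    -- drop the j = 0 term
    rw [hIcc0 (p - i), show Finset.Icc 0 (p - i) = insert 0 (Finset.Icc 1 (p - i)) by
      ext j; simp only [Finset.mem_Icc, Finset.mem_insert]; omega]
    rw [Finset.sum_insert (by simp)]
    have hzero : ∑ k' ∈ Finset.Icc 0 i,
        ((k.descFactorial 0 : ℂ) * u x ^ (k - 0)) *
          ((l.descFactorial k' : ℂ) * v x ^ (l - k')) * V x 0 k' = 0 := by
      refine Finset.sum_eq_zero fun k' _ => ?_
      have : V x 0 k' = 0 := by
        rw [hVdef]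
        have hb : bellB (p - i) 0 = fun _ => 0 :=
          funext fun d => bellB_zero_of_ne (by omega) d
        simp [hb, minkSum]
      rw [this, mul_zero]
    rw [hzero, zero_add]
  constructor
  · -- forward
    intro hsol j hj k' hk' x
    have H : ∀ k ∈ Finset.Icc 1 (p - i), ∀ l ∈ Finset.Icc 0 i,
        ∑ j' ∈ Finset.Icc 1 (p - i),
          ((k.descFactorial j' : ℂ) * u x ^ (k - j')) *
            (∑ k'' ∈ Finset.Icc 0 i,
              ((l.descFactorial k'' : ℂ) * v x ^ (l - k'')) * V x j' k'') = 0 := by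
      intro k hk l hl
      have h := hsol k hk l hl x
      rw [hmink x k l] at h
      rw [← h]
      exact Finset.sum_congr rfl fun j' _ => by
        rw [Finset.mul_sum]
        exact Finset.sum_congr rfl fun k'' _ => by ring
    have hU : ∀ l ∈ Finset.Icc 0 i, ∀ j' ∈ Finset.Icc 1 (p - i),
        ∑ k'' ∈ Finset.Icc 0 i,
          ((l.descFactorial k'' : ℂ) * v x ^ (l - k'')) * V x j' k'' = 0 := by
      intro l hl
      refine triang (fun k j' => (k.descFactorial j' : ℂ) * u x ^ (k - j')) _
        (fun k j' hkj => by
          rw [Nat.descFactorial_eq_zero_iff_lt.mpr hkj]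
          simp)
        (fun k => by
          rw [Nat.descFactorial_self, Nat.sub_self, pow_zero, mul_one]
          exact Nat.cast_ne_zero.mpr k.factorial_ne_zero)
        (fun k hk => H k hk l hl)
    have hV : ∀ k'' ∈ Finset.Icc 0 i, V x j k'' = 0 := by
      refine triang (fun l k'' => (l.descFactorial k'' : ℂ) * v x ^ (l - k'')) _
        (fun l k'' hlk => by
          rw [Nat.descFactorial_eq_zero_iff_lt.mpr hlk]
          simp)
        (fun l => by
          rw [Nat.descFactorial_self, Nat.sub_self, pow_zero, mul_one]
          exact Nat.cast_ne_zero.mpr l.factorial_ne_zero)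
        (fun l hl => hU l hl j hj)
    exact hV k' hk'
  · -- backward
    intro hbell k hk l hl x
    rw [hmink x k l]
    refine Finset.sum_eq_zero fun j hj => Finset.sum_eq_zero fun k' hk' => ?_
    have : V x j k' = 0 := hbell j hj k' hk' x
    rw [this, mul_zero]
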